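/- If X is a Poisson random variable with mean λ > 0, Y is a ℤ₊-valued random variable independent of X, and W = X + Y, then d_TV(W, W+1) ≤ 1/√(2eλ). -/

import Mathlib

open MeasureTheory ProbabilityTheory

/-- Total variation distance between two distributions on ℤ₊. -/
noncomputable def dTV (μ ν : Measure ℕ) : ℝ :=
  ⨆ A : Set ℕ, |(μ A).toReal - (ν A).toReal|

open Real
open scoped Nat NNReal

/-!
Write `p k = e^{-λ} λ^k / k!`. By independence, `P(W ∈ A) - P(W + 1 ∈ A)` is the
`P(Y = n)`-average of `∑_{k + n ∈ A} (p k - p (k - 1))` (with `p (-1) = 0`). The increments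
`p k - p (k - 1)` are nonnegative exactly up to the mode `⌊λ⌋`, where they telescope to `p ⌊λ⌋`,
and they sum to zero; hence every partial sum over a set of indices lies in `[-p ⌊λ⌋, p ⌊λ⌋]`.
Finally `p m ≤ 1 / √(2eλ)` for every `m`: `λ ^ (2m+1) e^{-2λ}` is maximal at `λ = m + 1/2`, and
`2 (m + 1/2) ^ (2m+1) ≤ (m!)² e^{2m}` by induction on `m`, the inductive step being
`(1 + u) log (1 + u) - (1 - u) log (1 - u) ≤ 2u` for `u = 1 / (2m + 2)`.
-/

section SignChange

variable {α : Type*} {q : α → ℝ} {S : Finset α}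

lemma tsum_indicator_le_sum_of_sign (hq : Summable q) (hS : ∀ j ∈ S, 0 ≤ q j)
    (hSc : ∀ j ∉ S, q j ≤ 0) (B : Set α) : ∑' j, B.indicator q j ≤ ∑ j ∈ S, q j := by
  classical
  calc ∑' j, B.indicator q j ≤ ∑' j, (S : Set α).indicator q j := by
        refine (hq.indicator B).tsum_le_tsum (fun j => ?_) (hq.indicator _)
        by_cases hB : j ∈ B <;> by_cases hj : j ∈ S <;> simp [*]
    _ = ∑ j ∈ S, q j := (sum_eq_tsum_indicator q S).symm

lemma abs_tsum_indicator_le_sum_of_sign (hq : Summable q) (hq0 : ∑' j, q j = 0)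
    (hS : ∀ j ∈ S, 0 ≤ q j) (hSc : ∀ j ∉ S, q j ≤ 0) (B : Set α) :
    |∑' j, B.indicator q j| ≤ ∑ j ∈ S, q j := by
  have hcompl : ∑' j, B.indicator q j = -∑' j, Bᶜ.indicator q j := by
    rw [eq_neg_iff_add_eq_zero, ← (hq.indicator B).tsum_add (hq.indicator Bᶜ)]
    simp [hq0]
  refine abs_le.2 ⟨?_, tsum_indicator_le_sum_of_sign hq hS hSc B⟩
  rw [hcompl, neg_le_neg_iff]
  exact tsum_indicator_le_sum_of_sign hq hS hSc Bᶜ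

end SignChange

def UnimodalAt (p : ℕ → ℝ) (m : ℕ) : Prop :=
  (∀ k < m, p k ≤ p (k + 1)) ∧ ∀ k, m ≤ k → p (k + 1) ≤ p k

lemma abs_tsum_indicator_sub_tsum_indicator_succ_le {p : ℕ → ℝ} (hp : Summable p) (hp0 : 0 ≤ p 0)
    {m : ℕ} (hmode : UnimodalAt p m) (B : Set ℕ) :
    |∑' k, B.indicator p k - ∑' k, {k | k + 1 ∈ B}.indicator p k| ≤ p m := by
  let q : ℕ → ℝ := fun | 0 => p 0 | k + 1 => p (k + 1) - p k
  have hq : Summable q := (summable_nat_add_iff 1).1 (((summable_nat_add_iff 1).2 hp).sub hp)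
  have hq0 : ∑' j, q j = 0 := by
    rw [hq.tsum_eq_zero_add]
    change p 0 + ∑' k, (p (k + 1) - p k) = 0
    rw [((summable_nat_add_iff 1).2 hp).tsum_sub hp, hp.tsum_eq_zero_add]
    ring
  have hsum : ∑ j ∈ Finset.range (m + 1), q j = p m := by
    rw [Finset.sum_range_succ']
    change ∑ k ∈ Finset.range m, (p (k + 1) - p k) + p 0 = p m
    rw [Finset.sum_range_sub]
    ring
  have hsplit : ∑' k, B.indicator q k
      = ∑' k, B.indicator p k - ∑' k, {k | k + 1 ∈ B}.indicator p k := by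
    have hsucc : ∀ k, B.indicator q (k + 1)
        = B.indicator p (k + 1) - {k | k + 1 ∈ B}.indicator p k := by
      intro k
      by_cases hk : k + 1 ∈ B <;> simp [hk, q]
    rw [(hq.indicator B).tsum_eq_zero_add, (hp.indicator B).tsum_eq_zero_add, tsum_congr hsucc,
      ((summable_nat_add_iff 1).2 (hp.indicator B)).tsum_sub (hp.indicator _), add_sub_assoc]
    rfl
  rw [← hsplit, ← hsum]
  refine abs_tsum_indicator_le_sum_of_sign hq hq0 (fun j hj => ?_) (fun j hj => ?_) B
  · rcases j with _ | k
    · exact hp0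
    · exact sub_nonneg.2 (hmode.1 k (by simpa using hj))
  · rcases j with _ | k
    · simp at hj
    · exact sub_nonpos.2 (hmode.2 k (by simpa using hj))

section Countable

variable {α : Type*} [MeasurableSpace α] [Countable α] [MeasurableSingletonClass α]
  (μ : Measure α) [IsFiniteMeasure μ]

lemma hasSum_indicator_measureReal_singleton (s : Set α) :
    HasSum (s.indicator fun a => μ.real {a}) (μ.real s) := by
  have hsum := Measure.tsum_indicator_apply_singleton μ s (.of_discrete)
  have := ENNReal.hasSum_toReal (hsum ▸ measure_ne_top μ s)
  rw [← ENNReal.tsum_toReal_eq fun a => by by_cases ha : a ∈ s <;> simp [ha], hsum] at this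
  rw [measureReal_def]
  convert this using 1
  ext a
  by_cases ha : a ∈ s <;> simp [ha, measureReal_def]

lemma hasSum_measureReal_singleton : HasSum (fun a => μ.real {a}) (μ.real Set.univ) := by
  simpa using hasSum_indicator_measureReal_singleton μ Set.univ

end Countable

lemma conv_apply_eq_tsum (μ ν : Measure ℕ) [SFinite ν] (A : Set ℕ) :
    (μ ∗ ν) A = ∑' n, μ {k | k + n ∈ A} * ν {n} := by
  rw [Measure.conv, Measure.map_apply measurable_add .of_discrete,
    Measure.prod_apply_symm .of_discrete, lintegral_countable']
  rfl

lemma conv_real_apply_eq_tsum (μ ν : Measure ℕ) [IsFiniteMeasure μ] [IsFiniteMeasure ν]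
    (A : Set ℕ) :
    (μ ∗ ν).real A = ∑' n, μ.real {k | k + n ∈ A} * ν.real {n} := by
  rw [measureReal_def, conv_apply_eq_tsum,
    ENNReal.tsum_toReal_eq fun n => ENNReal.mul_ne_top (measure_ne_top _ _) (measure_ne_top _ _)]
  simp only [ENNReal.toReal_mul, measureReal_def]

lemma abs_tsum_mul_sub_tsum_mul_le {ι : Type*} {a b r : ι → ℝ} {c : ℝ} (hr0 : ∀ n, 0 ≤ r n)
    (hr : HasSum r 1) (ha : ∀ n, |a n| ≤ 1) (hb : ∀ n, |b n| ≤ 1) (hab : ∀ n, |a n - b n| ≤ c) :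
    |∑' n, a n * r n - ∑' n, b n * r n| ≤ c := by
  have hsummable (f : ι → ℝ) (hf : ∀ n, |f n| ≤ 1) : Summable fun n => f n * r n :=
    hr.summable.of_norm_bounded fun n => by
      rw [Real.norm_eq_abs, abs_mul, abs_of_nonneg (hr0 n)]
      exact mul_le_of_le_one_left (hr0 n) (hf n)
  rw [← (hsummable a ha).tsum_sub (hsummable b hb)]
  simpa using tsum_of_norm_bounded (f := fun n => a n * r n - b n * r n) (hr.mul_left c) fun n => by
    rw [Real.norm_eq_abs, ← sub_mul, abs_mul, abs_of_nonneg (hr0 n)]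
    exact mul_le_mul_of_nonneg_right (hab n) (hr0 n)

lemma dTV_conv_map_add_one_le (μ ν : Measure ℕ) [IsProbabilityMeasure μ] [IsProbabilityMeasure ν]
    {m : ℕ} (hmode : UnimodalAt (fun k => μ.real {k}) m) :
    dTV (μ ∗ ν) ((μ ∗ ν).map (· + 1)) ≤ μ.real {m} := by
  refine Real.iSup_le (fun A => ?_) measureReal_nonneg
  change |(μ ∗ ν).real A - ((μ ∗ ν).map (· + 1)).real A| ≤ _
  have hprob (s : Set ℕ) : |μ.real s| ≤ 1 := by
    rw [abs_of_nonneg measureReal_nonneg]; exact measureReal_le_one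
  rw [map_measureReal_apply .of_discrete .of_discrete, conv_real_apply_eq_tsum,
    conv_real_apply_eq_tsum]
  refine abs_tsum_mul_sub_tsum_mul_le (fun n => measureReal_nonneg)
    (by simpa using hasSum_measureReal_singleton ν) (fun n => hprob _) (fun n => hprob _)
    fun n => ?_
  have hshift : {k | k + n ∈ (· + 1) ⁻¹' A} = {k | k + 1 ∈ {k | k + n ∈ A}} := by
    ext k
    simp [Nat.add_right_comm]
  rw [hshift, ← (hasSum_indicator_measureReal_singleton μ _).tsum_eq,
    ← (hasSum_indicator_measureReal_singleton μ _).tsum_eq]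
  exact abs_tsum_indicator_sub_tsum_indicator_succ_le
    (hasSum_measureReal_singleton μ).summable measureReal_nonneg hmode _

lemma one_add_mul_log_one_add_sub_one_sub_mul_log_one_sub_le {u : ℝ} (hu0 : 0 ≤ u) (hu1 : u < 1) :
    (1 + u) * log (1 + u) - (1 - u) * log (1 - u) ≤ 2 * u := by
  set g : ℝ → ℝ := fun x => (1 + x) * log (1 + x) - (1 - x) * log (1 - x) - 2 * x
  have hg' : ∀ x ∈ Set.Ico (0 : ℝ) 1, HasDerivAt g (log (1 - x ^ 2)) x := by
    rintro x ⟨hx0, hx1⟩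
    have hplus : (1 : ℝ) + x ≠ 0 := by linarith
    have hminus : (1 : ℝ) - x ≠ 0 := by linarith
    have hA := (hasDerivAt_id' x).const_add 1
    have hB := (hasDerivAt_id' x).const_sub 1
    refine ((hA.mul (hA.log hplus)).sub (hB.mul (hB.log hminus))).sub
      ((hasDerivAt_id' x).const_mul 2) |>.congr_deriv ?_
    rw [show 1 - x ^ 2 = (1 + x) * (1 - x) by ring, log_mul hplus hminus]
    field_simp
    ring
  have hanti : AntitoneOn g (Set.Ico 0 1) := by
    refine antitoneOn_of_hasDerivWithinAt_nonpos (convex_Ico 0 1)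
      (fun x hx => (hg' x hx).continuousAt.continuousWithinAt)
      (fun x hx => (hg' x (interior_subset hx)).hasDerivWithinAt) fun x hx => ?_
    rw [interior_Ico] at hx
    exact log_nonpos (by nlinarith [pow_le_one₀ (n := 2) hx.1.le hx.2.le]) (by nlinarith)
  simpa [g] using hanti ⟨le_rfl, one_pos⟩ ⟨hu0, hu1⟩ hu0

lemma add_three_halves_pow_le (m : ℕ) :
    ((m : ℝ) + 3 / 2) ^ (2 * m + 3)
      ≤ ((m : ℝ) + 1) ^ 2 * exp 2 * ((m : ℝ) + 1 / 2) ^ (2 * m + 1) := by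
  have hm : (0 : ℝ) < m + 1 := by positivity
  have key := one_add_mul_log_one_add_sub_one_sub_mul_log_one_sub_le
    (u := 1 / (2 * (m + 1))) (by positivity) (by rw [div_lt_one (by positivity)]; linarith)
  rw [show 1 + 1 / (2 * ((m : ℝ) + 1)) = (m + 3 / 2) / (m + 1) by field_simp; ring,
    show 1 - 1 / (2 * ((m : ℝ) + 1)) = (m + 1 / 2) / (m + 1) by field_simp; ring,
    log_div (by positivity) hm.ne', log_div (by positivity) hm.ne'] at key
  rw [← log_le_log_iff (by positivity) (by positivity), log_mul (by positivity) (by positivity),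
    log_mul (by positivity) (by positivity), log_pow, log_pow, log_pow, log_exp]
  rw [div_mul_eq_mul_div, div_mul_eq_mul_div, ← sub_div, div_le_iff₀ hm,
    show 2 * (1 / (2 * ((m : ℝ) + 1))) * (m + 1) = 1 by field_simp] at key
  push_cast
  linarith

lemma two_mul_add_half_pow_le_factorial_sq_mul_exp (m : ℕ) :
    2 * ((m : ℝ) + 1 / 2) ^ (2 * m + 1) ≤ (m ! : ℝ) ^ 2 * exp (2 * m) := by
  induction m with
  | zero => norm_num
  | succ m ih =>
    calc 2 * (((m + 1 : ℕ) : ℝ) + 1 / 2) ^ (2 * (m + 1) + 1)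
        = 2 * ((m : ℝ) + 3 / 2) ^ (2 * m + 3) := by push_cast; ring_nf
      _ ≤ ((m : ℝ) + 1) ^ 2 * exp 2 * (2 * ((m : ℝ) + 1 / 2) ^ (2 * m + 1)) := by
        nlinarith [add_three_halves_pow_le m]
      _ ≤ ((m : ℝ) + 1) ^ 2 * exp 2 * ((m ! : ℝ) ^ 2 * exp (2 * m)) := by gcongr
      _ = ((m + 1)! : ℝ) ^ 2 * exp (2 * (m + 1 : ℕ)) := by
        push_cast [Nat.factorial_succ]
        rw [mul_add, mul_one, exp_add]
        ring

lemma poissonMeasure_real_singleton_succ (r : ℝ≥0) (k : ℕ) :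
    (poissonMeasure r).real {k + 1} = r / (k + 1) * (poissonMeasure r).real {k} := by
  simp only [poissonMeasure_real_singleton, Nat.factorial_succ, pow_succ]
  push_cast
  field_simp

lemma unimodalAt_poissonMeasure_real (r : ℝ≥0) :
    UnimodalAt (fun k => (poissonMeasure r).real {k}) ⌊r⌋₊ := by
  refine ⟨fun k hk => ?_, fun k hk => ?_⟩ <;> dsimp only <;>
    rw [poissonMeasure_real_singleton_succ]
  · have : (k + 1 : ℝ) ≤ r := by exact_mod_cast (Nat.le_floor_iff' k.succ_ne_zero).mp hk
    refine le_mul_of_one_le_left measureReal_nonneg ?_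
    rwa [one_le_div (by positivity)]
  · have : (r : ℝ) ≤ k + 1 := by
      exact_mod_cast ((Nat.floor_lt' k.succ_ne_zero).mp (Nat.lt_succ_of_le hk)).le
    refine mul_le_of_le_one_left measureReal_nonneg ?_
    rwa [div_le_one (by positivity)]

lemma poissonMeasure_real_singleton_le (r : ℝ≥0) (hr : 0 < r) (m : ℕ) :
    (poissonMeasure r).real {m} ≤ 1 / √(2 * exp 1 * r) := by
  have hc : 0 < 2 * exp 1 * r := by positivity
  rw [le_div_iff₀ (sqrt_pos.2 hc), ← sqrt_sq measureReal_nonneg, ← sqrt_mul (sq_nonneg _),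
    sqrt_le_one]
  set a : ℝ := m + 1 / 2 with ha
  have hpeak : (r : ℝ) ^ (2 * m + 1) * exp (-(2 * r)) ≤ a ^ (2 * m + 1) * exp (-(2 * m + 1)) := by
    have := pow_le_pow_left₀ (by positivity) (mul_exp_neg_le_exp_neg_one (r / a)) (2 * m + 1)
    rw [mul_pow, div_pow, ← exp_nat_mul, ← exp_nat_mul, div_mul_eq_mul_div,
      div_le_iff₀ (by positivity)] at this
    have hexp : ((2 * m + 1 : ℕ) : ℝ) * -(r / a) = -(2 * r) := by
      rw [ha]; push_cast; field_simp
    rw [hexp] at this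
    refine this.trans_eq ?_
    push_cast
    ring_nf
  calc (poissonMeasure r).real {m} ^ 2 * (2 * exp 1 * r)
      = 2 * ((r : ℝ) ^ (2 * m + 1) * exp (-(2 * r))) * exp 1 / (m ! : ℝ) ^ 2 := by
        rw [poissonMeasure_real_singleton, show -(2 * (r : ℝ)) = -r + -r by ring, exp_add]
        ring
    _ ≤ 2 * (a ^ (2 * m + 1) * exp (-(2 * m + 1))) * exp 1 / (m ! : ℝ) ^ 2 := by gcongr
    _ = 2 * a ^ (2 * m + 1) / ((m ! : ℝ) ^ 2 * exp (2 * m)) := by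
        rw [mul_assoc, mul_assoc, ← exp_add, show -(2 * (m : ℝ) + 1) + 1 = -(2 * m) by ring,
          exp_neg]
        field_simp
    _ ≤ 1 := div_le_one_of_le₀ (two_mul_add_half_pow_le_factorial_sq_mul_exp m) (by positivity)

/-- If X is Poisson with mean λ > 0 and Y is ℤ₊-valued independent of X,
then W = X + Y satisfies d_TV(W, W+1) ≤ 1/√(2eλ). -/
theorem poisson_plus_indep_shift_dTV_bound
    {Ω : Type*} [MeasurableSpace Ω] (P : Measure Ω) [IsProbabilityMeasure P]
    (lam : ℝ) (hlam : 0 < lam) (X Y : Ω → ℕ) (hX : Measurable X) (hY : Measurable Y)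
    (hpois : ∀ k : ℕ, (P (X ⁻¹' {k})).toReal =
      Real.exp (-lam) * lam ^ k / (Nat.factorial k))
    (hindep : IndepFun X Y P)
    (W : Ω → ℕ) (hW : W = fun ω => X ω + Y ω) :
    dTV (P.map W) (P.map (fun ω => W ω + 1)) ≤
      1 / Real.sqrt (2 * Real.exp 1 * lam) := by
  obtain ⟨r, rfl⟩ : ∃ r : ℝ≥0, (r : ℝ) = lam := ⟨lam.toNNReal, Real.coe_toNNReal _ hlam.le⟩
  have hXlaw : P.map X = poissonMeasure r := Measure.ext_of_measureReal_singleton fun k => by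
    rw [map_measureReal_apply hX .of_discrete, poissonMeasure_real_singleton]
    exact hpois k
  have hWlaw : P.map W = poissonMeasure r ∗ P.map Y := by
    rw [hW, ← hXlaw]
    exact hindep.map_add_eq_map_conv_map hX hY
  have hW1law : P.map (fun ω => W ω + 1) = (P.map W).map (· + 1) :=
    (Measure.map_map .of_discrete (hW ▸ hX.add hY)).symm
  have := Measure.isProbabilityMeasure_map (μ := P) hY.aemeasurable
  rw [hW1law, hWlaw]
  exact (dTV_conv_map_add_one_le _ _ (unimodalAt_poissonMeasure_real r)).trans
    (poissonMeasure_real_singleton_le r (NNReal.coe_pos.1 hlam) _)
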